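/- For positive definite Hermitian matrices A and B, the matrix U := B^{-1/2} A^{-1/2} (A^{1/2} B A^{1/2})^{1/2} is unitary, i.e. U U* = I. -/

import Mathlib

open Matrix
open scoped ComplexOrder

/-- The positive semidefinite square root, as `Matrix.PosSemidef.sqrt` was defined in
Mathlib (December 2024); it has since been removed from Mathlib. -/
noncomputable def Matrix.PosSemidef.sqrt {n : Type*} [Fintype n] [DecidableEq n] {𝕜 : Type*}
    [RCLike 𝕜] {A : Matrix n n 𝕜} (hA : A.PosSemidef) : Matrix n n 𝕜 :=
  hA.1.eigenvectorUnitary.1 * diagonal ((↑) ∘ (Real.sqrt ·) ∘ hA.1.eigenvalues) *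
    (star hA.1.eigenvectorUnitary : Matrix n n 𝕜)

/-! With `a = A^{1/2}` and `b = B^{1/2}`, the square root `s` of `a B a` satisfies
`s sᴴ = a b b a = (a b)(a b)ᴴ`, and any `s` with `s sᴴ = M Mᴴ` makes `M⁻¹ s` unitary;
here `M⁻¹ = (a b)⁻¹ = b⁻¹ a⁻¹`. -/

namespace Matrix

variable {n : Type*} [Fintype n] [DecidableEq n]

theorem inv_mul_mul_conjTranspose_eq_one_of_mul_conjTranspose_eq {α : Type*} [CommRing α]
    [StarRing α] {M S : Matrix n n α} (hM : IsUnit M.det) (h : S * Sᴴ = M * Mᴴ) :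
    M⁻¹ * S * (M⁻¹ * S)ᴴ = 1 := by
  have hMH : IsUnit Mᴴ.det := by rw [det_conjTranspose]; exact hM.star
  calc M⁻¹ * S * (M⁻¹ * S)ᴴ = M⁻¹ * (S * Sᴴ) * Mᴴ⁻¹ := by
        simp only [conjTranspose_mul, conjTranspose_nonsing_inv, Matrix.mul_assoc]
    _ = (M⁻¹ * M) * (Mᴴ * Mᴴ⁻¹) := by rw [h]; simp only [Matrix.mul_assoc]
    _ = 1 := by rw [nonsing_inv_mul M hM, mul_nonsing_inv _ hMH, Matrix.one_mul]

namespace PosSemidef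

variable {𝕜 : Type*} [RCLike 𝕜] {A : Matrix n n 𝕜}

open Unitary in
theorem sqrt_eq_conjStarAlgAut (hA : A.PosSemidef) :
    hA.sqrt = conjStarAlgAut 𝕜 _ hA.1.eigenvectorUnitary
      (diagonal ((↑) ∘ (Real.sqrt ·) ∘ hA.1.eigenvalues)) := by
  rw [conjStarAlgAut_apply]
  rfl

theorem isHermitian_sqrt (hA : A.PosSemidef) : hA.sqrt.IsHermitian := by
  rw [sqrt_eq_conjStarAlgAut, IsHermitian, ← star_eq_conjTranspose, ← map_star,
    star_eq_conjTranspose, diagonal_conjTranspose]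
  congr 2
  funext i
  simp

theorem sqrt_mul_self (hA : A.PosSemidef) : hA.sqrt * hA.sqrt = A := by
  conv_rhs => rw [hA.1.spectral_theorem]
  rw [sqrt_eq_conjStarAlgAut, ← map_mul, diagonal_mul_diagonal]
  congr 2
  funext i
  simp only [Function.comp_apply]
  rw [← RCLike.ofReal_mul, Real.mul_self_sqrt (hA.eigenvalues_nonneg i)]

end PosSemidef

theorem PosDef.isUnit_det_sqrt {𝕜 : Type*} [RCLike 𝕜] {A : Matrix n n 𝕜} (hA : A.PosDef) :
    IsUnit hA.posSemidef.sqrt.det := by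
  have : IsUnit (hA.posSemidef.sqrt.det * hA.posSemidef.sqrt.det) := by
    rw [← det_mul, hA.posSemidef.sqrt_mul_self]
    exact hA.det_pos.ne'.isUnit
  exact isUnit_of_mul_isUnit_left this

end Matrix

theorem allpass_unitary (n : ℕ)
    (A B : Matrix (Fin n) (Fin n) ℂ) (hA : A.PosDef) (hB : B.PosDef)
    (hS : (hA.posSemidef.sqrt * B * hA.posSemidef.sqrt).PosSemidef) :
    (hB.posSemidef.sqrt⁻¹ * hA.posSemidef.sqrt⁻¹ * hS.sqrt) *
      (hB.posSemidef.sqrt⁻¹ * hA.posSemidef.sqrt⁻¹ * hS.sqrt)ᴴ = 1 := by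
  have hab : IsUnit (hA.posSemidef.sqrt * hB.posSemidef.sqrt).det := by
    rw [det_mul]
    exact hA.isUnit_det_sqrt.mul hB.isUnit_det_sqrt
  have hsq : hS.sqrt * hS.sqrtᴴ = (hA.posSemidef.sqrt * hB.posSemidef.sqrt) *
      (hA.posSemidef.sqrt * hB.posSemidef.sqrt)ᴴ := by
    rw [hS.isHermitian_sqrt.eq, hS.sqrt_mul_self, conjTranspose_mul,
      hA.posSemidef.isHermitian_sqrt.eq, hB.posSemidef.isHermitian_sqrt.eq]
    simp only [Matrix.mul_assoc]
    rw [← Matrix.mul_assoc hB.posSemidef.sqrt, hB.posSemidef.sqrt_mul_self]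
  rw [← Matrix.mul_inv_rev]
  exact inv_mul_mul_conjTranspose_eq_one_of_mul_conjTranspose_eq hab hsq
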